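/- (Factorization property of the subspace of diagonals.) Let $X$ be a set, $I_0 = I_0^{(1)} \sqcup I_0^{(2)}$ a partition of a finite set, and $I_1$ a finite set. Let $H \subseteq X^{I_1} \times X^{I_0}$ be the union over all functions $\pi: I_1 \to I_0$ of the partial diagonals $\{x_i = y_{\pi(i)}\}$, and let $U_\alpha = \{(x,y) : y_{j_1} \neq y_{j_2} \text{ for all } j_1 \in I_0^{(1)}, j_2 \in I_0^{(2)}\}$. Then $H \cap U_\alpha$ is the disjoint union, over partitions $I_1 = I_1^{(1)} \sqcup I_1^{(2)}$, of the sets $(H_1 \times H_2) \cap U_\alpha$, where $H_k \subseteq X^{I_1^{(k)}} \times X^{I_0^{(k)}}$ is the corresponding union of partial diagonals for $k = 1,2$ (identifying $X^{I_1}\times X^{I_0}$ with the product $X^{I_1^{(1)}}\times X^{I_0^{(1)}}\times X^{I_1^{(2)}}\times X^{I_0^{(2)}}$). -/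
import Mathlib


/-- Factorization property of the subspace of diagonals: writing `I₀ = A ⊔ B`, over the
open locus `U_α` where the `A`-points are disjoint from the `B`-points, the union of
diagonals `H` decomposes as the disjoint union, over partitions `I₁ = S ⊔ Sᶜ`, of products
of the corresponding unions of diagonals. -/
theorem diagonal_subspace_factorization (X A B I1 : Type*)
    [Finite A] [Finite B] [Finite I1] :
    letI U : Set ((I1 → X) × ((A ⊕ B) → X)) :=
      {p | ∀ (a : A) (b : B), p.2 (Sum.inl a) ≠ p.2 (Sum.inr b)}
    letI H : Set ((I1 → X) × ((A ⊕ B) → X)) :=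
      {p | ∃ π : I1 → A ⊕ B, ∀ i, p.1 i = p.2 (π i)}
    letI piece : Set I1 → Set ((I1 → X) × ((A ⊕ B) → X)) := fun S =>
      {p | (∃ π₁ : S → A, ∀ i : S, p.1 i.1 = p.2 (Sum.inl (π₁ i))) ∧
           (∃ π₂ : (Sᶜ : Set I1) → B, ∀ i : (Sᶜ : Set I1), p.1 i.1 = p.2 (Sum.inr (π₂ i)))}
    (H ∩ U = ⋃ S : Set I1, piece S ∩ U) ∧
    (∀ S T : Set I1, S ≠ T → piece S ∩ piece T ∩ U = ∅) := by
  classical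
  constructor
  · ext p
    simp only [Set.mem_inter_iff, Set.mem_iUnion, Set.mem_setOf_eq]
    constructor
    · rintro ⟨⟨π, hπ⟩, hU⟩
      have key : ∀ i : ({i | ∃ a, π i = Sum.inl a}ᶜ : Set I1), ∃ b, π i.1 = Sum.inr b := by
        rintro ⟨i, hi⟩
        rcases h : π i with a | b
        · exact absurd ⟨a, h⟩ hi
        · exact ⟨b, rfl⟩
      refine ⟨{i | ∃ a, π i = Sum.inl a}, ⟨⟨fun i => i.2.choose, fun i => ?_⟩,
        ⟨fun i => (key i).choose, fun i => ?_⟩⟩, hU⟩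
      · rw [hπ i.1, i.2.choose_spec]
      · rw [hπ i.1, (key i).choose_spec]
    · rintro ⟨S, ⟨⟨π₁, h₁⟩, ⟨π₂, h₂⟩⟩, hU⟩
      refine ⟨⟨fun i => if h : i ∈ S then Sum.inl (π₁ ⟨i, h⟩) else Sum.inr (π₂ ⟨i, h⟩),
        fun i => ?_⟩, hU⟩
      by_cases h : i ∈ S
      · simp only [h, dif_pos]; exact h₁ ⟨i, h⟩
      · simp only [h, dif_neg, not_false_iff]; exact h₂ ⟨i, h⟩
  · intro S T hST
    ext p
    simp only [Set.mem_inter_iff, Set.mem_setOf_eq, Set.mem_empty_iff_false, iff_false]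
    rintro ⟨⟨⟨⟨πS₁, hS₁⟩, ⟨πS₂, hS₂⟩⟩, ⟨⟨πT₁, hT₁⟩, ⟨πT₂, hT₂⟩⟩⟩, hU⟩
    have : ∃ i, (i ∈ S ∧ i ∉ T) ∨ (i ∈ T ∧ i ∉ S) := by
      by_contra h
      push_neg at h
      exact hST (Set.ext fun i => ⟨(h i).1, (h i).2⟩)
    obtain ⟨i, ⟨hiS, hiT⟩ | ⟨hiT, hiS⟩⟩ := this
    · exact hU (πS₁ ⟨i, hiS⟩) (πT₂ ⟨i, hiT⟩) ((hS₁ ⟨i, hiS⟩).symm.trans (hT₂ ⟨i, hiT⟩))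
    · exact hU (πT₁ ⟨i, hiT⟩) (πS₂ ⟨i, hiS⟩) ((hT₁ ⟨i, hiT⟩).symm.trans (hS₂ ⟨i, hiS⟩))
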